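/- arXiv:2503.04923 — 2 statements merged into one kernel-verified Lean document; each statement's English description precedes it below -/
import Mathlib

section
/- Every element of {1,…,n} is exactly one of b_1,…,b_k or a+μ̄_a for a unique 1 ≤ a ≤ n−k; consequently the map f_{λ/μ} is well defined, and f_{λ/μ} is a (k,n)-bounded affine permutation. -/
/-- The height `λ̄_a` of the `a`-th column (counted from the right) of the
partition `f = (f 1 ≥ ⋯ ≥ f k)` inside the `k × (n-k)` rectangle. -/
def colHeight (n k : ℕ) (f : ℕ → ℕ) (a : ℕ) : ℕ :=
  ((Finset.Icc 1 k).filter (fun i => n - k - a + 1 ≤ f i)).card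

/-- `b_i = n - k - μ_i + i`. -/
def bvec (n k : ℕ) (m : ℕ → ℕ) (i : ℕ) : ℕ := n - k - m i + i

/-- The short label `J(a,i) = {min (a+j-1) (b_j) : j = 1, …, i}`. -/
def shortLabel (n k : ℕ) (m : ℕ → ℕ) (a i : ℕ) : Finset ℕ :=
  (Finset.Icc 1 i).image (fun j => min (a + j - 1) (bvec n k m j))

/-- The label `I'(a,i) = J(a,i) ∪ {b_{i+1}, …, b_k}`. -/
def fullLabel (n k : ℕ) (m : ℕ → ℕ) (a i : ℕ) : Finset ℕ :=
  shortLabel n k m a i ∪ (Finset.Icc (i + 1) k).image (bvec n k m)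

/-- `I_μ = {b_1, …, b_k}`. -/
def Imu (n k : ℕ) (m : ℕ → ℕ) : Finset ℕ := (Finset.Icc 1 k).image (bvec n k m)

/-- The box `(a,i)` belongs to the skew diagram `λ/μ`. -/
def InSkew (n k : ℕ) (l m : ℕ → ℕ) (a i : ℕ) : Prop :=
  1 ≤ a ∧ a ≤ n - k ∧ 1 ≤ i ∧ i ≤ k ∧ colHeight n k m a < i ∧ i ≤ colHeight n k l a

/-- The box `(a,i)` belongs to the boundary ribbon `R(λ/μ)`. -/
def InRibbon (n k : ℕ) (l m : ℕ → ℕ) (a i : ℕ) : Prop :=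
  InSkew n k l m a i ∧ (a = 1 ∨ colHeight n k l (a - 1) ≤ i)

/-- A `(k,n)`-bounded affine permutation. -/
def IsBoundedAffinePerm (n k : ℕ) (f : ℤ → ℤ) : Prop :=
  Function.Bijective f ∧
  (∀ i : ℤ, f (i + n) = f i + n) ∧
  (∀ i : ℤ, i ≤ f i ∧ f i ≤ i + n) ∧
  (∑ i ∈ Finset.Icc (1 : ℤ) (n : ℤ), (f i - i)) = (n : ℤ) * (k : ℤ)

/-- The defining specification of the map `f_{λ/μ} : ℤ → ℤ`:
`f(a + μ̄_a) = a + λ̄_a`, `f(b_i) = (n - k - λ_i + i) + n`, and `n`-periodicity. -/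
def IsSkewBAF (n k : ℕ) (l m : ℕ → ℕ) (f : ℤ → ℤ) : Prop :=
  (∀ a : ℕ, 1 ≤ a → a ≤ n - k →
    f ((a + colHeight n k m a : ℕ) : ℤ) = ((a + colHeight n k l a : ℕ) : ℤ)) ∧
  (∀ i : ℕ, 1 ≤ i → i ≤ k →
    f ((bvec n k m i : ℕ) : ℤ) = ((n - k - l i + i : ℕ) : ℤ) + (n : ℤ)) ∧
  (∀ j : ℤ, f (j + (n : ℤ)) = f j + (n : ℤ))


/-!
Write `I_p = {b_1, …, b_k}` and `H_p = {a + p̄_a : 1 ≤ a ≤ n - k}` for a partition `p` in the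
`k × (n - k)` rectangle. Reading the boundary path of `p` from the top right corner, step `b_i`
is the vertical step in row `i` and step `a + p̄_a` the horizontal step in column `a`, so `I_p`
and `H_p` partition `{1, …, n}`. The map `f_{λ/μ}` sends `H_μ` onto `H_λ` and `I_μ` onto
`I_λ + n`, hence permutes the residues modulo `n` and is bijective; `μ ⊆ λ` gives the bounds,
and the displacements sum to `kn + |μ| - |λ| + (|λ| - |μ|) = kn`.
-/

open Finset

/-- The set `H_p` of positions `a + p̄_a`; its complement in `{1, …, n}` is `Imu n k p`. -/
def colSteps (n k : ℕ) (p : ℕ → ℕ) : Finset ℕ :=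
  (Icc 1 (n - k)).image fun a => a + colHeight n k p a

section Partition

variable {n k : ℕ} {p : ℕ → ℕ}

theorem colHeight_le (n k : ℕ) (p : ℕ → ℕ) (a : ℕ) : colHeight n k p a ≤ k := by
  simpa [colHeight] using card_filter_le (Icc 1 k) fun i => n - k - a + 1 ≤ p i

theorem colHeight_monotone (n k : ℕ) (p : ℕ → ℕ) : Monotone (colHeight n k p) :=
  fun _ _ h => card_le_card <| monotone_filter_right _ fun _ _ => by omega

theorem colHeight_le_colHeight {l m : ℕ → ℕ}
    (hml : ∀ i, 1 ≤ i → i ≤ k → m i ≤ l i) (a : ℕ) :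
    colHeight n k m a ≤ colHeight n k l a := by
  refine card_le_card fun i hi => ?_
  simp only [mem_filter, mem_Icc] at hi ⊢
  exact ⟨hi.1, hi.2.trans (hml i hi.1.1 hi.1.2)⟩

theorem le_colHeight_iff (hp : AntitoneOn p (Set.Icc 1 k)) {a i : ℕ} (hi : i ∈ Set.Icc 1 k) :
    i ≤ colHeight n k p a ↔ n - k - a + 1 ≤ p i := by
  constructor
  · intro h
    by_contra! hlt
    have hsub : (Icc 1 k).filter (fun j => n - k - a + 1 ≤ p j) ⊆ Icc 1 (i - 1) := by
      intro j hj
      simp only [mem_filter, mem_Icc] at hj ⊢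
      by_contra! hij
      have := hp hi ⟨hj.1.1, hj.1.2⟩ (by omega : i ≤ j)
      omega
    have := card_le_card hsub
    rw [Nat.card_Icc] at this
    unfold colHeight at h
    have := hi.1
    omega
  · intro h
    have hsub : Icc 1 i ⊆ (Icc 1 k).filter (fun j => n - k - a + 1 ≤ p j) := by
      intro j hj
      simp only [mem_filter, mem_Icc] at hj ⊢
      exact ⟨⟨hj.1, hj.2.trans hi.2⟩, h.trans (hp ⟨hj.1, hj.2.trans hi.2⟩ hi hj.2)⟩
    have := card_le_card hsub
    rw [Nat.card_Icc] at this
    unfold colHeight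
    omega

theorem add_colHeight_ne_bvec (hp : AntitoneOn p (Set.Icc 1 k)) {a i : ℕ}
    (ha : a ∈ Set.Icc 1 (n - k)) (hi : i ∈ Set.Icc 1 k) :
    a + colHeight n k p a ≠ bvec n k p i := by
  have hiff := le_colHeight_iff (n := n) (a := a) hp hi
  obtain ⟨ha1, han⟩ := ha
  unfold bvec
  by_cases h : i ≤ colHeight n k p a
  · have := hiff.1 h
    omega
  · have := mt hiff.2 h
    omega

theorem bvec_strictMonoOn (hp : AntitoneOn p (Set.Icc 1 k)) :
    StrictMonoOn (bvec n k p) (Set.Icc 1 k) := fun i hi j hj hij => by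
  have := hp hi hj hij.le
  unfold bvec
  omega

theorem add_colHeight_strictMono (n k : ℕ) (p : ℕ → ℕ) :
    StrictMono fun a => a + colHeight n k p a :=
  strictMono_id.add_monotone (colHeight_monotone n k p)

theorem bvec_mem_Icc (hkn : k ≤ n) {i : ℕ} (hi : i ∈ Set.Icc 1 k) :
    bvec n k p i ∈ Set.Icc 1 n := by
  obtain ⟨hi1, hik⟩ := hi
  constructor <;> unfold bvec <;> omega

theorem add_colHeight_mem_Icc (hkn : k ≤ n) {a : ℕ} (ha : a ∈ Set.Icc 1 (n - k)) :
    a + colHeight n k p a ∈ Set.Icc 1 n := by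
  obtain ⟨ha1, han⟩ := ha
  have := colHeight_le n k p a
  constructor <;> omega

theorem disjoint_Imu_colSteps (hp : AntitoneOn p (Set.Icc 1 k)) :
    Disjoint (Imu n k p) (colSteps n k p) := by
  simp only [disjoint_left, Imu, colSteps, mem_image, mem_Icc, not_exists, not_and]
  rintro _ ⟨i, hi, rfl⟩ a ha h
  exact add_colHeight_ne_bvec hp ha hi h

theorem Imu_union_colSteps (hp : AntitoneOn p (Set.Icc 1 k)) (hkn : k ≤ n) :
    Imu n k p ∪ colSteps n k p = Icc 1 n := by
  have hI : Imu n k p ⊆ Icc 1 n :=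
    image_subset_iff.2 fun i hi => by simpa using bvec_mem_Icc hkn (mem_Icc.1 hi)
  have hJ : colSteps n k p ⊆ Icc 1 n :=
    image_subset_iff.2 fun a ha => by simpa using add_colHeight_mem_Icc (p := p) hkn (mem_Icc.1 ha)
  refine eq_of_subset_of_card_le (union_subset hI hJ) ?_
  rw [card_union_of_disjoint (disjoint_Imu_colSteps hp), Imu, colSteps,
    card_image_of_injOn (by rw [coe_Icc]; exact (bvec_strictMonoOn hp).injOn),
    card_image_of_injective _ (add_colHeight_strictMono n k p).injective]
  simp only [Nat.card_Icc]
  omega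

theorem bvec_or_add_colHeight (hp : AntitoneOn p (Set.Icc 1 k)) (hkn : k ≤ n) {r : ℕ}
    (hr : r ∈ Set.Icc 1 n) :
    (∃ i ∈ Set.Icc 1 k, bvec n k p i = r) ∨
      ∃ a ∈ Set.Icc 1 (n - k), a + colHeight n k p a = r := by
  have : r ∈ Imu n k p ∪ colSteps n k p := by
    rw [Imu_union_colSteps hp hkn]
    exact mem_Icc.2 hr
  simpa [Imu, colSteps] using this

theorem xor_existsUnique_bvec_add_colHeight (hp : AntitoneOn p (Set.Icc 1 k)) (hkn : k ≤ n)
    {r : ℕ} (hr : r ∈ Set.Icc 1 n) :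
    Xor (∃! i : ℕ, (1 ≤ i ∧ i ≤ k) ∧ bvec n k p i = r)
      (∃! a : ℕ, (1 ≤ a ∧ a ≤ n - k) ∧ a + colHeight n k p a = r) := by
  rcases bvec_or_add_colHeight hp hkn hr with ⟨i, hi, rfl⟩ | ⟨a, ha, rfl⟩
  · refine Or.inl ⟨⟨i, ⟨hi, rfl⟩, fun j hj => (bvec_strictMonoOn hp).injOn hj.1 hi hj.2⟩,
      ?_⟩
    rintro ⟨a, ⟨ha, hai⟩, -⟩
    exact add_colHeight_ne_bvec hp ha hi hai
  · refine Or.inr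
      ⟨⟨a, ⟨ha, rfl⟩, fun b hb => (add_colHeight_strictMono n k p).injective hb.2⟩, ?_⟩
    rintro ⟨i, ⟨hi, hia⟩, -⟩
    exact add_colHeight_ne_bvec hp ha hi hia.symm

/-- Both sides count the boxes of `p`. -/
theorem sum_colHeight (hp : ∀ i, 1 ≤ i → i ≤ k → p i ≤ n - k) :
    ∑ a ∈ Icc 1 (n - k), colHeight n k p a = ∑ i ∈ Icc 1 k, p i := by
  simp only [colHeight, card_filter]
  rw [sum_comm]
  refine sum_congr rfl fun i hi => ?_
  rw [← card_filter]
  have hpi := hp i (mem_Icc.1 hi).1 (mem_Icc.1 hi).2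
  have : (Icc 1 (n - k)).filter (fun a => n - k - a + 1 ≤ p i) =
      Icc (n - k - p i + 1) (n - k) := by
    ext a
    simp only [mem_filter, mem_Icc]
    omega
  rw [this, Nat.card_Icc]
  omega

end Partition

section Equivariant

variable {n : ℕ} {f g : ℤ → ℤ}

theorem exists_eq_natCast_add_mul (hn : 0 < n) (j : ℤ) :
    ∃ r ∈ Set.Icc 1 n, ∃ q : ℤ, j = r + n * q := by
  have h1 : 0 ≤ (j - 1) % n := Int.emod_nonneg _ (by omega)
  have h2 : (j - 1) % n < n := Int.emod_lt_of_pos _ (by omega)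
  have h3 := Int.mul_ediv_add_emod (j - 1) n
  refine ⟨((j - 1) % n).toNat + 1, ⟨by omega, by omega⟩, (j - 1) / n, ?_⟩
  push_cast
  omega

theorem map_add_mul (hf : ∀ j : ℤ, f (j + n) = f j + n) (j q : ℤ) :
    f (j + n * q) = f j + n * q := by
  have hper : Function.Periodic (fun j => f j - j) (n : ℤ) := fun j => by
    show f (j + n) - (j + n) = f j - j
    rw [hf]
    ring
  have : f (j + q * n) - (j + q * n) = f j - j := hper.int_mul q j
  rw [mul_comm q] at this
  linarith

theorem eq_of_eqOn_Icc (hn : 0 < n) (hf : ∀ j : ℤ, f (j + n) = f j + n)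
    (hg : ∀ j : ℤ, g (j + n) = g j + n) (h : ∀ r ∈ Set.Icc 1 n, f r = g r) : f = g := by
  funext j
  obtain ⟨r, hr, q, rfl⟩ := exists_eq_natCast_add_mul hn j
  rw [map_add_mul hf, map_add_mul hg, h r hr]

theorem exists_map_add_eqOn_Icc (hn : 0 < n) (v : ℕ → ℤ) :
    ∃ f : ℤ → ℤ, (∀ j : ℤ, f (j + n) = f j + n) ∧
      ∀ r ∈ Set.Icc 1 n, f r = v r := by
  refine ⟨fun j => v (((j - 1) % n).toNat + 1) + n * ((j - 1) / n), fun j => ?_, fun r hr => ?_⟩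
  · have hj : j + n - 1 = (j - 1) + 1 * n := by ring
    have hn' : (n : ℤ) ≠ 0 := by omega
    simp only [hj, Int.add_mul_emod_self_right, Int.add_mul_ediv_right _ _ hn']
    ring
  · obtain ⟨hr1, hrn⟩ := hr
    dsimp only
    rw [Int.emod_eq_of_lt (by omega) (by omega), Int.ediv_eq_zero_of_lt (by omega) (by omega)]
    simp only [mul_zero, add_zero]
    congr
    omega

theorem natCast_injOn_Icc : Set.InjOn (Nat.cast : ℕ → ZMod n) (Set.Icc 1 n) := by
  intro x hx y hy hxy
  obtain ⟨hx1, hxn⟩ := hx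
  obtain ⟨hy1, hyn⟩ := hy
  refine ((ZMod.natCast_eq_natCast_iff _ _ _).1 hxy).eq_of_abs_lt ?_
  rw [abs_lt]
  omega

theorem bijective_of_injOn_zmod (hn : 0 < n) (hf : ∀ j : ℤ, f (j + n) = f j + n)
    (h : Set.InjOn (fun r : ℕ => (f r : ZMod n)) (Set.Icc 1 n)) : Function.Bijective f := by
  have : NeZero n := ⟨hn.ne'⟩
  refine ⟨fun x y hxy => ?_, fun y => ?_⟩
  · obtain ⟨r, hr, q, rfl⟩ := exists_eq_natCast_add_mul hn x
    obtain ⟨s, hs, q', rfl⟩ := exists_eq_natCast_add_mul hn y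
    rw [map_add_mul hf, map_add_mul hf] at hxy
    obtain rfl : r = s := h hr hs (by simpa using congrArg (Int.cast : ℤ → ZMod n) hxy)
    obtain rfl : q = q' := by
      have : (n : ℤ) * q = n * q' := by linarith
      exact mul_left_cancel₀ (by omega) this
    rfl
  · obtain ⟨r, -, hr⟩ := surjOn_of_injOn_of_card_le (s := Icc 1 n) _
      (fun _ _ => mem_coe.2 (mem_univ _)) (by rwa [coe_Icc]) (by simp) (mem_univ (y : ZMod n))
    obtain ⟨q, hq⟩ := (ZMod.intCast_eq_intCast_iff_dvd_sub _ _ _).1 hr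
    exact ⟨r + n * q, by rw [map_add_mul hf]; linarith⟩

end Equivariant

theorem Finset.sum_Icc_natCast {M : Type*} [AddCommMonoid M] (a b : ℕ) (g : ℤ → M) :
    ∑ j ∈ Icc (a : ℤ) b, g j = ∑ r ∈ Icc a b, g r := by
  symm
  refine sum_nbij' (fun r : ℕ => (r : ℤ)) Int.toNat ?_ ?_ ?_ ?_ fun _ _ => rfl <;>
    intro x hx <;> simp only [mem_Icc] at hx ⊢ <;> omega

section SkewMap

variable {n k : ℕ} {l m : ℕ → ℕ} {f g : ℤ → ℤ}

theorem exists_isSkewBAF (hm : AntitoneOn m (Set.Icc 1 k)) (hkn : k ≤ n) (hn : 0 < n) :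
    ∃ f : ℤ → ℤ, IsSkewBAF n k l m f := by
  have hval : ∀ r : ℕ, ∃ z : ℤ,
      (∀ i ∈ Set.Icc 1 k, bvec n k m i = r → z = ((bvec n k l i : ℕ) : ℤ) + n) ∧
      ∀ a ∈ Set.Icc 1 (n - k), a + colHeight n k m a = r →
        z = ((a + colHeight n k l a : ℕ) : ℤ) := by
    intro r
    by_cases hI : ∃ i ∈ Set.Icc 1 k, bvec n k m i = r
    · obtain ⟨i, hi, rfl⟩ := hI
      exact ⟨_, fun j hj h => by rw [(bvec_strictMonoOn hm).injOn hj hi h],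
        fun a ha h => absurd h (add_colHeight_ne_bvec hm ha hi)⟩
    by_cases hJ : ∃ a ∈ Set.Icc 1 (n - k), a + colHeight n k m a = r
    · obtain ⟨a, -, rfl⟩ := hJ
      exact ⟨_, fun i hi h => absurd ⟨i, hi, h⟩ hI,
        fun b _ h => by rw [(add_colHeight_strictMono n k m).injective h]⟩
    · exact ⟨0, fun i hi h => absurd ⟨i, hi, h⟩ hI, fun a ha h => absurd ⟨a, ha, h⟩ hJ⟩
  choose v hv using hval
  obtain ⟨f, hf, hfv⟩ := exists_map_add_eqOn_Icc hn v
  refine ⟨f, fun a ha1 han => ?_, fun i hi1 hik => ?_, hf⟩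
  · rw [hfv _ (add_colHeight_mem_Icc hkn ⟨ha1, han⟩), (hv _).2 a ⟨ha1, han⟩ rfl]
  · rw [hfv _ (bvec_mem_Icc hkn ⟨hi1, hik⟩), (hv _).1 i ⟨hi1, hik⟩ rfl]
    rfl

theorem IsSkewBAF.eq (hm : AntitoneOn m (Set.Icc 1 k)) (hkn : k ≤ n) (hn : 0 < n)
    (hf : IsSkewBAF n k l m f) (hg : IsSkewBAF n k l m g) : f = g := by
  refine eq_of_eqOn_Icc hn hf.2.2 hg.2.2 fun r hr => ?_
  rcases bvec_or_add_colHeight hm hkn hr with ⟨i, hi, rfl⟩ | ⟨a, ha, rfl⟩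
  · rw [hf.2.1 i hi.1 hi.2, hg.2.1 i hi.1 hi.2]
  · rw [hf.1 a ha.1 ha.2, hg.1 a ha.1 ha.2]

theorem IsSkewBAF.bijective (hl : AntitoneOn l (Set.Icc 1 k)) (hm : AntitoneOn m (Set.Icc 1 k))
    (hkn : k ≤ n) (hn : 0 < n) (hf : IsSkewBAF n k l m f) : Function.Bijective f := by
  have hres : ∀ r ∈ Set.Icc 1 n,
      (∃ i ∈ Set.Icc 1 k, r = bvec n k m i ∧ (f r : ZMod n) = (bvec n k l i : ℕ)) ∨
      ∃ a ∈ Set.Icc 1 (n - k), r = a + colHeight n k m a ∧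
        (f r : ZMod n) = ((a + colHeight n k l a : ℕ) : ZMod n) := by
    intro r hr
    rcases bvec_or_add_colHeight hm hkn hr with ⟨i, hi, rfl⟩ | ⟨a, ha, rfl⟩
    · refine Or.inl ⟨i, hi, rfl, ?_⟩
      rw [hf.2.1 i hi.1 hi.2, Int.cast_add, Int.cast_natCast, Int.cast_natCast, ZMod.natCast_self, add_zero]
      rfl
    · exact Or.inr ⟨a, ha, rfl, by rw [hf.1 a ha.1 ha.2, Int.cast_natCast]⟩
  refine bijective_of_injOn_zmod hn hf.2.2 fun r hr s hs hrs => ?_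
  rcases hres r hr with ⟨i, hi, rfl, hfr⟩ | ⟨a, ha, rfl, hfr⟩ <;>
    rcases hres s hs with ⟨j, hj, rfl, hfs⟩ | ⟨b, hb, rfl, hfs⟩ <;>
    have h := hfr.symm.trans (hrs.trans hfs)
  · rw [(bvec_strictMonoOn hl).injOn hi hj
      (natCast_injOn_Icc (bvec_mem_Icc hkn hi) (bvec_mem_Icc hkn hj) h)]
  · exact absurd (natCast_injOn_Icc (add_colHeight_mem_Icc hkn hb) (bvec_mem_Icc hkn hi) h.symm)
      (add_colHeight_ne_bvec hl hb hi)
  · exact absurd (natCast_injOn_Icc (add_colHeight_mem_Icc hkn ha) (bvec_mem_Icc hkn hj) h)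
      (add_colHeight_ne_bvec hl ha hj)
  · rw [(add_colHeight_strictMono n k l).injective
      (natCast_injOn_Icc (add_colHeight_mem_Icc hkn ha) (add_colHeight_mem_Icc hkn hb) h)]

theorem IsSkewBAF.le_apply_le (hm : AntitoneOn m (Set.Icc 1 k)) (hkn : k ≤ n)
    (hml : ∀ i, 1 ≤ i → i ≤ k → m i ≤ l i) (hf : IsSkewBAF n k l m f) {r : ℕ}
    (hr : r ∈ Set.Icc 1 n) : (r : ℤ) ≤ f r ∧ f r ≤ r + n := by
  rcases bvec_or_add_colHeight hm hkn hr with ⟨i, hi, rfl⟩ | ⟨a, ha, rfl⟩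
  · rw [hf.2.1 i hi.1 hi.2]
    have := hml i hi.1 hi.2
    have := hi.2
    unfold bvec
    constructor <;> omega
  · rw [hf.1 a ha.1 ha.2]
    have := colHeight_le_colHeight (n := n) hml a
    have := colHeight_le n k l a
    constructor <;> omega

theorem IsSkewBAF.sum_sub (hm : AntitoneOn m (Set.Icc 1 k)) (hkn : k ≤ n)
    (hml : ∀ i, 1 ≤ i → i ≤ k → m i ≤ l i)
    (hl : ∀ i, 1 ≤ i → i ≤ k → l i ≤ n - k)
    (hf : IsSkewBAF n k l m f) : ∑ j ∈ Icc (1 : ℤ) n, (f j - j) = n * k := by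
  have hI : ∀ i ∈ Icc 1 k,
      f (bvec n k m i) - (bvec n k m i : ℕ) = n + (m i : ℤ) - l i := by
    intro i hi
    rw [mem_Icc] at hi
    rw [hf.2.1 i hi.1 hi.2]
    have := hml i hi.1 hi.2
    have := hl i hi.1 hi.2
    unfold bvec
    omega
  have hJ : ∀ a ∈ Icc 1 (n - k), f ↑(a + colHeight n k m a) - ↑(a + colHeight n k m a) =
      (colHeight n k l a : ℤ) - colHeight n k m a := by
    intro a ha
    rw [mem_Icc] at ha
    rw [hf.1 a ha.1 ha.2]
    push_cast
    ring
  have hsum (p : ℕ → ℕ) (hp : ∀ i, 1 ≤ i → i ≤ k → p i ≤ n - k) :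
      ∑ a ∈ Icc 1 (n - k), (colHeight n k p a : ℤ) = ∑ i ∈ Icc 1 k, (p i : ℤ) := by
    exact_mod_cast sum_colHeight hp
  rw [Nat.cast_one.symm, sum_Icc_natCast, ← Imu_union_colSteps hm hkn,
    sum_union (disjoint_Imu_colSteps hm), Imu, colSteps,
    sum_image (by rw [coe_Icc]; exact (bvec_strictMonoOn hm).injOn),
    sum_image fun _ _ _ _ h => (add_colHeight_strictMono n k m).injective h,
    sum_congr rfl hI, sum_congr rfl hJ, sum_sub_distrib, sum_add_distrib, sum_sub_distrib,
    hsum l hl, hsum m fun i h1 h2 => (hml i h1 h2).trans (hl i h1 h2)]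
  simp only [sum_const, Nat.card_Icc]
  push_cast
  ring

theorem IsSkewBAF.isBoundedAffinePerm (hl : AntitoneOn l (Set.Icc 1 k))
    (hm : AntitoneOn m (Set.Icc 1 k)) (hml : ∀ i, 1 ≤ i → i ≤ k → m i ≤ l i)
    (hlb : ∀ i, 1 ≤ i → i ≤ k → l i ≤ n - k) (hkn : k < n) (hf : IsSkewBAF n k l m f) :
    IsBoundedAffinePerm n k f := by
  have hn : 0 < n := by omega
  refine ⟨hf.bijective hl hm hkn.le hn, hf.2.2, fun j => ?_, hf.sum_sub hm hkn.le hml hlb⟩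
  obtain ⟨r, hr, q, rfl⟩ := exists_eq_natCast_add_mul hn j
  obtain ⟨hr1, hr2⟩ := hf.le_apply_le hm hkn.le hml hr
  rw [map_add_mul hf.2.2]
  constructor <;> linarith

end SkewMap

theorem stmt8_general (n k : ℕ) (l m : ℕ → ℕ)
    (hkn : k < n)
    (hlmono : ∀ i j, 1 ≤ i → i ≤ j → j ≤ k → l j ≤ l i)
    (hl1 : l 1 ≤ n - k)
    (hmmono : ∀ i j, 1 ≤ i → i ≤ j → j ≤ k → m j ≤ m i)
    (hml : ∀ i, 1 ≤ i → i ≤ k → m i ≤ l i)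
    :
    (∀ j ∈ Finset.Icc 1 n,
      Xor' (∃! i : ℕ, (1 ≤ i ∧ i ≤ k) ∧ bvec n k m i = j)
           (∃! a : ℕ, (1 ≤ a ∧ a ≤ n - k) ∧ a + colHeight n k m a = j)) ∧
    (∃! f : ℤ → ℤ, IsSkewBAF n k l m f) ∧
    (∀ f : ℤ → ℤ, IsSkewBAF n k l m f → IsBoundedAffinePerm n k f) := by
  have hl : AntitoneOn l (Set.Icc 1 k) := fun i hi j hj hij => hlmono i j hi.1 hij hj.2
  have hm : AntitoneOn m (Set.Icc 1 k) := fun i hi j hj hij => hmmono i j hi.1 hij hj.2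
  have hlb : ∀ i, 1 ≤ i → i ≤ k → l i ≤ n - k := fun i h1 h2 =>
    (hlmono 1 i le_rfl h1 h2).trans hl1
  have hn : 0 < n := by omega
  obtain ⟨f, hf⟩ := exists_isSkewBAF (l := l) hm hkn.le hn
  exact ⟨fun r hr => xor_existsUnique_bvec_add_colHeight hm hkn.le (mem_Icc.1 hr),
    ⟨f, hf, fun g hg => hg.eq hm hkn.le hn hf⟩,
    fun g hg => hg.isBoundedAffinePerm hl hm hml hlb hkn⟩

theorem stmt8 (n k : ℕ) (l m : ℕ → ℕ)
    (hk : 0 < k) (hkn : k < n)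
    (hlmono : ∀ i j, 1 ≤ i → i ≤ j → j ≤ k → l j ≤ l i)
    (hl1 : l 1 ≤ n - k)
    (hmmono : ∀ i j, 1 ≤ i → i ≤ j → j ≤ k → m j ≤ m i)
    (hml : ∀ i, 1 ≤ i → i ≤ k → m i ≤ l i)
    :
    (∀ j ∈ Finset.Icc 1 n,
      Xor' (∃! i : ℕ, (1 ≤ i ∧ i ≤ k) ∧ bvec n k m i = j)
           (∃! a : ℕ, (1 ≤ a ∧ a ≤ n - k) ∧ a + colHeight n k m a = j)) ∧
    (∃! f : ℤ → ℤ, IsSkewBAF n k l m f) ∧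
    (∀ f : ℤ → ℤ, IsSkewBAF n k l m f → IsBoundedAffinePerm n k f) :=
  stmt8_general n k l m hkn hlmono hl1 hmmono hml
end

section
/- Suppose v : ℤ → ℂ^k represents a point of the skew shaped positroid S°_{λ/μ}. Then for every box (a,i) in the skew diagram λ/μ, the subspace V(a,i) has dimension i. -/
/-- `S` is the `r`-th entry of the Grassmann necklace `I_{λ/μ}`. -/
def IsNecklaceEntry (n k : ℕ) (l m : ℕ → ℕ) (r : ℕ) (S : Finset ℕ) : Prop :=
  (∃ a i, InRibbon n k l m a i ∧ r = a + i - 1 ∧ S = fullLabel n k m a i) ∨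
  ((¬ ∃ a i, InRibbon n k l m a i ∧ r = a + i - 1) ∧ S = Imu n k m)

/-- The family `{v_j : j ∈ S}` is a basis of `ℂ^k`. -/
def IsBasisFam (k : ℕ) (v : ℤ → Fin k → ℂ) (S : Finset ℕ) : Prop :=
  LinearIndependent ℂ (fun j : ↥S => v ((j : ℕ) : ℤ)) ∧
  Submodule.span ℂ ((fun j : ℕ => v (j : ℤ)) '' (S : Set ℕ)) = ⊤

/-- `v : ℤ → ℂ^k` represents a point of the skew shaped positroid `S°_{λ/μ}`. -/
def RepsPoint (n k : ℕ) (l m : ℕ → ℕ) (v : ℤ → Fin k → ℂ) : Prop :=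
  (∀ j : ℤ, v (j + (n : ℤ)) = ((-1 : ℂ) ^ (k - 1)) • v j) ∧
  (∀ r ∈ Finset.Icc 1 n, ∀ S : Finset ℕ, IsNecklaceEntry n k l m r S → IsBasisFam k v S) ∧
  (∀ a : ℕ, 1 ≤ a → a ≤ n - k →
    v ((a + colHeight n k m a : ℕ) : ℤ) ∈
      Submodule.span ℂ ((fun j : ℕ => v (j : ℤ)) ''
        ↑(Finset.Icc (a + colHeight n k m a + 1) (a + colHeight n k l a))))

/-- `V(a,i) = span{v_j : j ∈ J(a,i)}`. -/
noncomputable def Vspace (n k : ℕ) (m : ℕ → ℕ) (v : ℤ → Fin k → ℂ) (a i : ℕ) :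
    Submodule ℂ (Fin k → ℂ) :=
  Submodule.span ℂ ((fun j : ℕ => v (j : ℤ)) '' ↑(shortLabel n k m a i))

/-- `W^op_p = span(v_{b_1}, …, v_{b_p})`. -/
noncomputable def Wop (n k : ℕ) (m : ℕ → ℕ) (v : ℤ → Fin k → ℂ) (p : ℕ) :
    Submodule ℂ (Fin k → ℂ) :=
  Submodule.span ℂ ((fun j : ℕ => v (j : ℤ)) '' ↑((Finset.Icc 1 p).image (bvec n k m)))

/-- `W_p = span(v_{b_{k-p+1}}, …, v_{b_k})`. -/
noncomputable def Wsp (n k : ℕ) (m : ℕ → ℕ) (v : ℤ → Fin k → ℂ) (p : ℕ) :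
    Submodule ℂ (Fin k → ℂ) :=
  Submodule.span ℂ ((fun j : ℕ => v (j : ℤ)) '' ↑((Finset.Icc (k - p + 1) k).image (bvec n k m)))

lemma bvec_mono (n k : ℕ) (m : ℕ → ℕ)
    (hmmono : ∀ i j, 1 ≤ i → i ≤ j → j ≤ k → m j ≤ m i)
    {j j' : ℕ} (h1 : 1 ≤ j) (h2 : j ≤ j') (h3 : j' ≤ k) :
    bvec n k m j + (j' - j) ≤ bvec n k m j' := by
  unfold bvec
  have hm : m j' ≤ m j := hmmono j j' h1 h2 h3
  have : n - k - m j ≤ n - k - m j' := Nat.sub_le_sub_left hm _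
  omega

lemma shortLabel_card (n k : ℕ) (m : ℕ → ℕ)
    (hmmono : ∀ i j, 1 ≤ i → i ≤ j → j ≤ k → m j ≤ m i)
    {a i : ℕ} (ha : 1 ≤ a) (hik : i ≤ k) :
    (shortLabel n k m a i).card = i := by
  have key : ∀ x y, 1 ≤ x → x < y → y ≤ i →
      min (a + x - 1) (bvec n k m x) < min (a + y - 1) (bvec n k m y) := by
    intro x y hx hxy hyi
    have hb := bvec_mono n k m hmmono hx (le_of_lt hxy) (le_trans hyi hik)
    omega
  unfold shortLabel
  rw [Finset.card_image_of_injOn, Nat.card_Icc]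
  · omega
  · intro x hx y hy hxy
    simp only [Finset.coe_Icc, Set.mem_Icc] at hx hy
    rcases lt_trichotomy x y with h | h | h
    · exact absurd hxy (ne_of_lt (key x y hx.1 h hy.2))
    · exact h
    · exact absurd hxy.symm (ne_of_lt (key y x hy.1 h hx.2))

lemma shortLabel_subset (n k : ℕ) (m : ℕ → ℕ)
    (hmmono : ∀ i j, 1 ≤ i → i ≤ j → j ≤ k → m j ≤ m i)
    {a i a'' i'' : ℕ} (ha'' : 1 ≤ a'') (haa : a'' ≤ a)
    (hd : a'' + i'' = a + i) (hik : i'' ≤ k) :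
    shortLabel n k m a i ⊆ shortLabel n k m a'' i'' := by
  intro x hx
  simp only [shortLabel, Finset.mem_image, Finset.mem_Icc] at hx ⊢
  obtain ⟨j, ⟨hj1, hj2⟩, rfl⟩ := hx
  by_cases hc : bvec n k m j ≤ a'' + j - 1
  · exact ⟨j, ⟨hj1, by omega⟩, by omega⟩
  · push_neg at hc
    refine ⟨min (a + j - 1) (bvec n k m j) - a'' + 1, ⟨by omega, by omega⟩, ?_⟩
    have hb := bvec_mono n k m hmmono hj1
      (show j ≤ min (a + j - 1) (bvec n k m j) - a'' + 1 by omega)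
      (show min (a + j - 1) (bvec n k m j) - a'' + 1 ≤ k by omega)
    omega

lemma colHeight_le_k (n k : ℕ) (f : ℕ → ℕ) (a : ℕ) : colHeight n k f a ≤ k := by
  unfold colHeight
  calc ((Finset.Icc 1 k).filter _).card ≤ (Finset.Icc 1 k).card :=
        Finset.card_filter_le _ _
    _ = k := by rw [Nat.card_Icc]; omega

lemma colHeight_mono_a (n k : ℕ) (f : ℕ → ℕ) {a a' : ℕ} (h : a' ≤ a) :
    colHeight n k f a' ≤ colHeight n k f a := by
  unfold colHeight
  apply Finset.card_le_card
  intro x hx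
  simp only [Finset.mem_filter] at hx ⊢
  have := Nat.sub_le_sub_left h (n - k)
  exact ⟨hx.1, by omega⟩

lemma exists_ribbon (n k : ℕ) (l m : ℕ → ℕ) :
    ∀ a i, InSkew n k l m a i →
      ∃ a'' i'', InRibbon n k l m a'' i'' ∧ a'' ≤ a ∧ a'' + i'' = a + i := by
  intro a
  induction a using Nat.strong_induction_on with
  | _ a ih =>
    intro i hbox
    obtain ⟨h1, h2, h3, h4, h5, h6⟩ := hbox
    by_cases hr : a = 1 ∨ colHeight n k l (a - 1) ≤ i
    · exact ⟨a, i, ⟨⟨h1, h2, h3, h4, h5, h6⟩, hr⟩, le_refl a, rfl⟩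
    · push_neg at hr
      obtain ⟨ha1, hlt⟩ := hr
      have ha2 : 2 ≤ a := by omega
      have hlk := colHeight_le_k n k l (a - 1)
      have hmm := colHeight_mono_a n k m (show a - 1 ≤ a by omega)
      have hbox' : InSkew n k l m (a - 1) (i + 1) :=
        ⟨by omega, by omega, by omega, by omega, by omega, by omega⟩
      obtain ⟨a'', i'', hrib, hle, hdiag⟩ := ih (a - 1) (by omega) (i + 1) hbox'
      exact ⟨a'', i'', hrib, by omega, by omega⟩

theorem stmt11 (n k : ℕ) (l m : ℕ → ℕ)
    (hk : 0 < k) (hkn : k < n)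
    (hlmono : ∀ i j, 1 ≤ i → i ≤ j → j ≤ k → l j ≤ l i)
    (hl1 : l 1 ≤ n - k)
    (hmmono : ∀ i j, 1 ≤ i → i ≤ j → j ≤ k → m j ≤ m i)
    (hml : ∀ i, 1 ≤ i → i ≤ k → m i ≤ l i)
    (v : ℤ → Fin k → ℂ) (hv : RepsPoint n k l m v)
    (a i : ℕ) (hbox : InSkew n k l m a i) :
    Module.finrank ℂ ↥(Vspace n k m v a i) = i := by
  obtain ⟨h1, h2, h3, h4, h5, h6⟩ := hbox
  obtain ⟨a'', i'', hrib, hle, hdiag⟩ :=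
    exists_ribbon n k l m a i ⟨h1, h2, h3, h4, h5, h6⟩
  have g1 := hrib.1.1
  have g4 := hrib.1.2.2.2.1
  -- the necklace entry at r = a + i - 1
  have hr : a + i - 1 ∈ Finset.Icc 1 n := by
    simp only [Finset.mem_Icc]
    omega
  have hne : IsNecklaceEntry n k l m (a + i - 1) (fullLabel n k m a'' i'') :=
    Or.inl ⟨a'', i'', hrib, by omega, rfl⟩
  have hbasis := hv.2.1 (a + i - 1) hr _ hne
  have linF := hbasis.1
  have hsub : shortLabel n k m a i ⊆ fullLabel n k m a'' i'' :=
    Finset.Subset.trans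
      (shortLabel_subset n k m hmmono g1 hle hdiag g4)
      Finset.subset_union_left
  -- linear independence of the subfamily
  have linJ : LinearIndependent ℂ
      (fun j : ↥(shortLabel n k m a i) => v ((j : ℕ) : ℤ)) := by
    have := linF.comp
      (fun x : ↥(shortLabel n k m a i) =>
        (⟨x.1, hsub x.2⟩ : ↥(fullLabel n k m a'' i'')))
      (fun x y hxy => by
        cases x; cases y
        simpa using congrArg Subtype.val hxy)
    exact this
  have hcard := shortLabel_card n k m hmmono h1 h4
  have hrange : ((fun j : ℕ => v (j : ℤ)) '' ↑(shortLabel n k m a i)) =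
      Set.range (fun j : ↥(shortLabel n k m a i) => v ((j : ℕ) : ℤ)) := by
    ext x
    simp [Set.mem_image, Set.mem_range, Subtype.exists]
  rw [Vspace, hrange, finrank_span_eq_card linJ, Fintype.card_coe, hcard]
end
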